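/- arXiv:1507.06944 — 4 statements merged into one kernel-verified Lean document; each statement's English description precedes it below -/
import Mathlib

section
/- The encoding n from binary trees to natural numbers, defined by n(x) = 0 and n(A ▸ B) = cons(n(A), n(B)), is a bijection between the set of binary trees and ℕ. -/
/-- Binary trees: a leaf `x` or a node with two children. -/
inductive BT where
  | leaf : BT
  | node : BT → BT → BT

/-- The `cons` operation on natural numbers. -/
def consNat (i j : ℕ) : ℕ :=
  if Odd j then 2 ^ (i + 1) * j else 2 ^ (i + 1) * (j + 1) - 1

/-- The encoding of binary trees as natural numbers. -/
def enc : BT → ℕ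
  | .leaf => 0
  | .node a b => consNat (enc a) (enc b)

/-!
`consNat i j` is `2 ^ (i + 1) * j` for odd `j` and one less than `2 ^ (i + 1) * (j + 1)` for even
`j`. So its parity records the parity of `j`, and then the factorization of a positive integer
into a power of two times an odd number recovers `i` and `j`: `consNat` is a bijection from
`ℕ × ℕ` onto the positive integers, with both arguments smaller than the value. Injectivity of
`enc` follows by induction on trees, surjectivity by strong induction on `ℕ`.
-/

theorem Nat.pow_mul_inj_of_not_dvd {p a b m n : ℕ} (hp : p.Prime) (hm : ¬p ∣ m)
    (hn : ¬p ∣ n) : p ^ a * m = p ^ b * n ↔ a = b ∧ m = n := by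
  refine ⟨fun h => ?_, by rintro ⟨rfl, rfl⟩; rfl⟩
  have : Fact p.Prime := ⟨hp⟩
  have hm0 : m ≠ 0 := by rintro rfl; exact hm (dvd_zero p)
  have hn0 : n ≠ 0 := by rintro rfl; exact hn (dvd_zero p)
  obtain rfl : a = b := by
    simpa [padicValNat.mul (pow_ne_zero _ hp.ne_zero) hm0,
      padicValNat.mul (pow_ne_zero _ hp.ne_zero) hn0, padicValNat.eq_zero_of_not_dvd hm,
      padicValNat.eq_zero_of_not_dvd hn] using congrArg (padicValNat p) h
  exact ⟨rfl, Nat.eq_of_mul_eq_mul_left (pow_pos hp.pos a) h⟩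

theorem Nat.two_pow_mul_inj_of_odd {a b m n : ℕ} (hm : Odd m) (hn : Odd n) :
    2 ^ a * m = 2 ^ b * n ↔ a = b ∧ m = n :=
  Nat.pow_mul_inj_of_not_dvd Nat.prime_two (by simpa [← even_iff_two_dvd] using hm)
    (by simpa [← even_iff_two_dvd] using hn)

theorem Nat.exists_eq_two_pow_succ_mul_odd_of_even {n : ℕ} (hn : n ≠ 0) (h2 : Even n) :
    ∃ k m : ℕ, Odd m ∧ n = 2 ^ (k + 1) * m := by
  obtain ⟨k, m, hm, rfl⟩ := Nat.exists_eq_two_pow_mul_odd hn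
  obtain ⟨k, rfl⟩ : ∃ k', k = k' + 1 := by
    refine Nat.exists_eq_add_one.mpr (Nat.pos_of_ne_zero ?_)
    rintro rfl
    exact Nat.not_even_iff_odd.mpr hm (by simpa using h2)
  exact ⟨k, m, hm, rfl⟩

theorem consNat_of_odd {i j : ℕ} (hj : Odd j) : consNat i j = 2 ^ (i + 1) * j := if_pos hj

theorem consNat_add_one_of_even {i j : ℕ} (hj : Even j) :
    consNat i j + 1 = 2 ^ (i + 1) * (j + 1) := by
  have : 1 ≤ 2 ^ (i + 1) * (j + 1) := Nat.one_le_iff_ne_zero.mpr (by positivity)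
  rw [consNat, if_neg (Nat.not_odd_iff_even.mpr hj)]
  omega

theorem even_consNat_iff {i j : ℕ} : Even (consNat i j) ↔ Odd j := by
  rcases Nat.even_or_odd j with hj | hj
  · have : Even (consNat i j + 1) := by
      rw [consNat_add_one_of_even hj]; simp [Nat.even_pow, parity_simps]
    simp [Nat.even_add_one.mp this, Nat.not_odd_iff_even.mpr hj]
  · simp [consNat_of_odd hj, hj, Nat.even_pow]

theorem lt_consNat_left (i j : ℕ) : i < consNat i j := by
  have hi : i + 1 < 2 ^ (i + 1) := Nat.lt_two_pow_self
  rcases Nat.even_or_odd j with hj | hj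
  · have := consNat_add_one_of_even (i := i) hj
    nlinarith
  · rw [consNat_of_odd hj]
    nlinarith [hj.pos]

theorem lt_consNat_right (i j : ℕ) : j < consNat i j := by
  have h2 : 2 ≤ 2 ^ (i + 1) := Nat.le_self_pow (Nat.succ_ne_zero i) 2
  rcases Nat.even_or_odd j with hj | hj
  · have := consNat_add_one_of_even (i := i) hj
    nlinarith
  · rw [consNat_of_odd hj]
    nlinarith [hj.pos]

theorem consNat_ne_zero (i j : ℕ) : consNat i j ≠ 0 :=
  Nat.ne_zero_of_lt (lt_consNat_right i j)

theorem consNat_injective2 : Function.Injective2 consNat := by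
  intro i i' j j' h
  have hparity : Odd j ↔ Odd j' := by rw [← even_consNat_iff, ← even_consNat_iff, h]
  rcases Nat.even_or_odd j with hj | hj
  · have hj' : Even j' := by rwa [← Nat.not_odd_iff_even, ← hparity, Nat.not_odd_iff_even]
    have h1 : 2 ^ (i + 1) * (j + 1) = 2 ^ (i' + 1) * (j' + 1) := by
      rw [← consNat_add_one_of_even hj, ← consNat_add_one_of_even hj', h]
    obtain ⟨hi, hj⟩ := (Nat.two_pow_mul_inj_of_odd hj.add_one hj'.add_one).mp h1
    exact ⟨by omega, by omega⟩
  · rw [consNat_of_odd hj, consNat_of_odd (hparity.mp hj)] at h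
    obtain ⟨hi, hj⟩ := (Nat.two_pow_mul_inj_of_odd hj (hparity.mp hj)).mp h
    exact ⟨by omega, hj⟩

theorem exists_consNat_eq {n : ℕ} (hn : n ≠ 0) : ∃ i j, consNat i j = n := by
  rcases Nat.even_or_odd n with hn2 | hn2
  · obtain ⟨i, m, hm, rfl⟩ := Nat.exists_eq_two_pow_succ_mul_odd_of_even hn hn2
    exact ⟨i, m, consNat_of_odd hm⟩
  · obtain ⟨i, m, hm, hnm⟩ :=
      Nat.exists_eq_two_pow_succ_mul_odd_of_even n.succ_ne_zero hn2.add_one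
    obtain ⟨m, rfl⟩ : ∃ m', m = m' + 1 := Nat.exists_eq_add_one.mpr hm.pos
    have hm' : Even m := by simpa [Nat.odd_add_one] using hm
    refine ⟨i, m, ?_⟩
    have := consNat_add_one_of_even (i := i) hm'
    omega

theorem enc_injective : Function.Injective enc := by
  intro s t h
  induction s generalizing t with
  | leaf =>
    cases t with
    | leaf => rfl
    | node c d => exact absurd h.symm (consNat_ne_zero _ _)
  | node a b iha ihb =>
    cases t with
    | leaf => exact absurd h (consNat_ne_zero _ _)
    | node c d =>
      obtain ⟨hac, hbd⟩ := consNat_injective2 h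
      rw [iha hac, ihb hbd]

theorem enc_surjective : Function.Surjective enc := by
  intro n
  induction n using Nat.strong_induction_on with
  | _ n ih =>
    rcases eq_or_ne n 0 with rfl | hn
    · exact ⟨.leaf, rfl⟩
    obtain ⟨i, j, rfl⟩ := exists_consNat_eq hn
    obtain ⟨a, rfl⟩ := ih _ (lt_consNat_left i j)
    obtain ⟨b, rfl⟩ := ih _ (lt_consNat_right _ j)
    exact ⟨.node a b, rfl⟩

theorem enc_bijective : Function.Bijective enc :=
  ⟨enc_injective, enc_surjective⟩
end

section
/- The maps b2c and c2b are mutually inverse; in particular, b2c is a bijection between de Bruijn lambda terms and compressed de Bruijn terms. -/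
/-- De Bruijn lambda terms. -/
inductive DB where
  | v : ℕ → DB
  | l : DB → DB
  | a : DB → DB → DB

/-- Compressed de Bruijn terms. -/
inductive CDB where
  | v : ℕ → ℕ → CDB
  | a : ℕ → CDB → CDB → CDB

/-- Increment the binder count at the root of a compressed term. -/
def bump : CDB → CDB
  | .v k m => .v (k + 1) m
  | .a k x y => .a (k + 1) x y

/-- From de Bruijn terms to compressed de Bruijn terms. -/
def b2c : DB → CDB
  | .v m => .v 0 m
  | .a t u => .a 0 (b2c t) (b2c u)
  | .l t => bump (b2c t)

/-- Wrap `k` lambda abstractions around a de Bruijn term. -/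
def iterL : ℕ → DB → DB
  | 0, t => t
  | k + 1, t => .l (iterL k t)

/-- From compressed de Bruijn terms to de Bruijn terms. -/
def c2b : CDB → DB
  | .v k m => iterL k (.v m)
  | .a k x y => iterL k (.a (c2b x) (c2b y))

theorem c2b_bump (x : CDB) : c2b (bump x) = .l (c2b x) := by
  cases x <;> rfl

theorem c2b_b2c (t : DB) : c2b (b2c t) = t := by
  induction t with
  | v m => rfl
  | l t ih => rw [b2c, c2b_bump, ih]
  | a t u iht ihu => rw [b2c, c2b, iht, ihu]; rfl

theorem b2c_iterL (k : ℕ) (t : DB) : b2c (iterL k t) = bump^[k] (b2c t) := by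
  induction k with
  | zero => rfl
  | succ k ih => rw [iterL, b2c, ih, Function.iterate_succ_apply']

theorem iterate_bump_v (k j m : ℕ) : bump^[k] (.v j m) = .v (j + k) m := by
  induction k with
  | zero => rfl
  | succ k ih => rw [Function.iterate_succ_apply', ih]; rfl

theorem iterate_bump_a (k j : ℕ) (x y : CDB) : bump^[k] (.a j x y) = .a (j + k) x y := by
  induction k with
  | zero => rfl
  | succ k ih => rw [Function.iterate_succ_apply', ih]; rfl

theorem b2c_c2b (x : CDB) : b2c (c2b x) = x := by
  induction x with
  | v k m => rw [c2b, b2c_iterL, b2c, iterate_bump_v, zero_add]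
  | a k x y ihx ihy => rw [c2b, b2c_iterL, b2c, ihx, ihy, iterate_bump_a, zero_add]

theorem b2c_c2b_inverse :
    Function.LeftInverse c2b b2c ∧ Function.RightInverse c2b b2c ∧
      Function.Bijective b2c :=
  ⟨c2b_b2c, b2c_c2b, Function.LeftInverse.injective c2b_b2c,
    Function.LeftInverse.surjective b2c_c2b⟩
end

section
/- For every n ≥ 1, the generalized Cantor n-tupling function K_n : ℕ^n → ℕ is a bijection. -/
/-!
Splitting off the last coordinate gives `K_{n+1}(x) = K_n(x_1, …, x_n) + C(n + s, n + 1)` with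
`s = x_1 + ⋯ + x_{n+1}`, while `K_n(y) < C(n + Σ y, n)`. Hence `K_{n+1}` sends the tuples of sum
`s` into `[C(n + s, n + 1), C(n + s + 1, n + 1))`; these intervals partition `ℕ`, which gives
injectivity by induction. By Pascal's rule the interval has length `C(n + s, n)`, and induction
on `n` shows that `K_n` maps the tuples of sum at most `s` onto `[0, C(n + s, n))`.
-/

/-- The generalized Cantor n-tupling function
`K_n(x_1,…,x_n) = Σ_{k=1}^n C(k-1+s_k, k)` where `s_k = x_1 + ⋯ + x_k`. -/
def cantorTuple (n : ℕ) (x : Fin n → ℕ) : ℕ :=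
  ∑ k : Fin n, Nat.choose (k.val + ∑ i : Fin n, if i ≤ k then x i else 0) (k.val + 1)

open Set

theorem cantorTuple_succ {n : ℕ} (x : Fin (n + 1) → ℕ) :
    cantorTuple (n + 1) x = cantorTuple n (Fin.init x) + (n + ∑ i, x i).choose (n + 1) := by
  simp [cantorTuple, Fin.sum_univ_castSucc (n := n), Fin.init, Fin.le_last]

theorem cantorTuple_snoc {n : ℕ} (y : Fin n → ℕ) (c : ℕ) :
    cantorTuple (n + 1) (Fin.snoc y c) =
      cantorTuple n y + (n + (∑ i, y i + c)).choose (n + 1) := by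
  rw [cantorTuple_succ, Fin.init_snoc, Fin.sum_snoc]

theorem add_choose_succ_strictMono (n : ℕ) : StrictMono fun t ↦ (n + t).choose (n + 1) :=
  strictMono_nat_of_lt_succ fun t ↦ by
    rw [← add_assoc, Nat.choose_succ_succ']
    exact Nat.lt_add_of_pos_left (Nat.choose_pos (Nat.le_add_right n t))

theorem exists_mem_Ico_add_choose_succ (n N : ℕ) :
    ∃ t, N ∈ Ico ((n + t).choose (n + 1)) ((n + (t + 1)).choose (n + 1)) := by
  have hmono := add_choose_succ_strictMono n
  have hcover := iUnion_Ico_map_succ_eq_Ici (fun t ↦ hmono.monotone bot_le)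
    hmono.not_bddAbove_range_of_wellFoundedLT
  simpa using (Set.ext_iff.mp hcover N)

theorem cantorTuple_lt_add_choose {n : ℕ} (x : Fin n → ℕ) :
    cantorTuple n x < (n + ∑ i, x i).choose n := by
  induction n with
  | zero => simp [cantorTuple]
  | succ n ih =>
    have hinit : ∑ i, Fin.init x i ≤ ∑ i, x i := by
      simp [Fin.sum_univ_castSucc (f := x), Fin.init]
    calc cantorTuple (n + 1) x
        < (n + ∑ i, x i).choose n + (n + ∑ i, x i).choose (n + 1) := by
          rw [cantorTuple_succ]
          exact Nat.add_lt_add_right ((ih _).trans_le (Nat.choose_le_choose _ (by omega))) _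
      _ = (n + 1 + ∑ i, x i).choose (n + 1) := by
          rw [add_right_comm, Nat.choose_succ_succ']

theorem cantorTuple_succ_mem_Ico {n : ℕ} (x : Fin (n + 1) → ℕ) :
    cantorTuple (n + 1) x ∈
      Ico ((n + ∑ i, x i).choose (n + 1)) ((n + (∑ i, x i + 1)).choose (n + 1)) := by
  refine ⟨cantorTuple_succ x ▸ Nat.le_add_left _ _, ?_⟩
  rw [← add_assoc, add_right_comm]
  exact cantorTuple_lt_add_choose x

theorem exists_sum_le_and_cantorTuple_eq (n s r : ℕ) (hr : r < (n + s).choose n) :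
    ∃ x : Fin n → ℕ, ∑ i, x i ≤ s ∧ cantorTuple n x = r := by
  induction n generalizing s r with
  | zero => exact ⟨Fin.elim0, by simp, by simp_all [cantorTuple]⟩
  | succ n ih =>
    obtain ⟨t, hlo, hhi⟩ := exists_mem_Ico_add_choose_succ n r
    have hts : t ≤ s := by
      by_contra! hst
      have := (add_choose_succ_strictMono n).monotone (show s + 1 ≤ t from hst)
      rw [add_right_comm, add_assoc] at hr
      omega
    rw [← add_assoc, Nat.choose_succ_succ'] at hhi
    obtain ⟨y, hy, hyr⟩ := ih t (r - (n + t).choose (n + 1)) (by omega)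
    refine ⟨Fin.snoc y (t - ∑ i, y i), by rw [Fin.sum_snoc]; omega, ?_⟩
    rw [cantorTuple_snoc, hyr, Nat.add_sub_cancel' hy]
    omega

theorem cantorTuple_injective (n : ℕ) : Function.Injective (cantorTuple n) := by
  induction n with
  | zero => exact fun x y _ ↦ Subsingleton.elim x y
  | succ n ih =>
    intro x y hxy
    have hsum : ∑ i, x i = ∑ i, y i := by
      by_contra hne
      have hdisj := (add_choose_succ_strictMono n).monotone.pairwise_disjoint_on_Ico_succ hne
      exact disjoint_left.mp hdisj (cantorTuple_succ_mem_Ico x) (hxy ▸ cantorTuple_succ_mem_Ico y)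
    have hinit : Fin.init x = Fin.init y := by
      apply ih
      rw [cantorTuple_succ, cantorTuple_succ, hsum] at hxy
      omega
    have hlast : x (Fin.last n) = y (Fin.last n) := by
      have hsum_init : ∑ i, Fin.init x i = ∑ i, Fin.init y i := by rw [hinit]
      rw [Fin.sum_univ_castSucc x, Fin.sum_univ_castSucc y] at hsum
      change ∑ i, Fin.init x i + _ = ∑ i, Fin.init y i + _ at hsum
      omega
    rw [← Fin.snoc_init_self x, ← Fin.snoc_init_self y, hinit, hlast]

theorem cantorTuple_surjective {n : ℕ} (hn : 0 < n) : Function.Surjective (cantorTuple n) := by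
  obtain ⟨m, rfl⟩ := Nat.exists_eq_succ_of_ne_zero hn.ne'
  intro N
  have hN : N < (m + 1 + N).choose (m + 1) := by
    rw [add_right_comm, add_assoc]
    exact (add_choose_succ_strictMono m).le_apply
  obtain ⟨x, -, hx⟩ := exists_sum_le_and_cantorTuple_eq (m + 1) N N hN
  exact ⟨x, hx⟩

theorem cantorTuple_bijective (n : ℕ) (hn : 1 ≤ n) :
    Function.Bijective (cantorTuple n) :=
  ⟨cantorTuple_injective n, cantorTuple_surjective hn⟩
end

section
/- The map rank is a bijection between de Bruijn lambda terms and binary trees. -/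
instance : Inhabited BT := ⟨BT.leaf⟩

/-- The decoding of natural numbers as binary trees: the inverse of `enc`. -/
noncomputable def t : ℕ → BT := Function.invFun enc

/-- The `rank` map from de Bruijn terms to binary trees. -/
noncomputable def rank : DB → BT
  | .v 0 => .leaf
  | .v (k + 1) => .node (t (k + 1)) .leaf
  | .l A => .node .leaf (rank A)
  | .a A B => .node (t (enc (rank A) + 1)) (t (enc (rank B) + 1))

namespace Nat

theorem two_pow_mul_odd_inj {a b m n : ℕ} (hm : Odd m) (hn : Odd n)
    (h : 2 ^ a * m = 2 ^ b * n) : a = b ∧ m = n := by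
  have hmn : m = n := by
    have := congrArg (fun x => ordCompl[2] x) h
    simpa only [ordCompl_pow_mul_of_not_dvd _ prime_two hm.not_two_dvd_nat,
      ordCompl_pow_mul_of_not_dvd _ prime_two hn.not_two_dvd_nat] using this
  subst hmn
  exact ⟨Nat.pow_right_injective le_rfl (Nat.eq_of_mul_eq_mul_right hm.pos h), rfl⟩

theorem exists_eq_two_pow_succ_mul_odd {n : ℕ} (hn : n ≠ 0) (he : Even n) :
    ∃ i m, Odd m ∧ n = 2 ^ (i + 1) * m := by
  obtain ⟨_ | i, m, hm, rfl⟩ := exists_eq_two_pow_mul_odd hn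
  · simp only [pow_zero, one_mul] at he
    exact absurd he (not_even_iff_odd.mpr hm)
  · exact ⟨i, m, hm, rfl⟩

end Nat

theorem consNat_of_even {i j : ℕ} (hj : Even j) :
    consNat i j = 2 ^ (i + 1) * (j + 1) - 1 :=
  if_neg (Nat.not_odd_iff_even.mpr hj)

theorem odd_consNat_iff {i j : ℕ} : Odd (consNat i j) ↔ ¬Odd j := by
  unfold consNat
  split_ifs with hj
  · simp [parity_simps, hj]
  · have hpos : 1 ≤ 2 ^ (i + 1) * (j + 1) := Nat.one_le_iff_ne_zero.mpr (by positivity)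
    simp [Nat.odd_sub hpos, parity_simps, hj]

theorem enc_eq_zero_iff {T : BT} : enc T = 0 ↔ T = .leaf := by
  cases T with
  | leaf => simp [enc]
  | node a b => simpa [enc] using Nat.ne_zero_of_lt (lt_consNat_left (enc a) (enc b))

theorem t_enc (T : BT) : t (enc T) = T :=
  Function.leftInverse_invFun enc_injective T

theorem enc_t (n : ℕ) : enc (t n) = n :=
  Function.rightInverse_invFun enc_surjective n

theorem t_injective : Function.Injective t :=
  Function.LeftInverse.injective enc_t

theorem t_eq_leaf_iff {n : ℕ} : t n = .leaf ↔ n = 0 := by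
  rw [← enc_eq_zero_iff, enc_t]

@[simp]
theorem t_add_one_ne_leaf (n : ℕ) : t (n + 1) ≠ .leaf :=
  t_eq_leaf_iff.not.mpr n.add_one_ne_zero

@[simp]
theorem leaf_ne_t_add_one (n : ℕ) : .leaf ≠ t (n + 1) :=
  (t_add_one_ne_leaf n).symm

theorem rank_injective : Function.Injective rank := by
  intro A B h
  induction A generalizing B with
  | v k =>
    rcases B with (_ | k') | B | ⟨B₁, B₂⟩ <;> rcases k with _ | k <;>
      simp [rank, t_injective.eq_iff] at h ⊢
    exact h
  | l A ih =>
    rcases B with (_ | k') | B | ⟨B₁, B₂⟩ <;> simp [rank] at h ⊢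
    exact ih h
  | a A₁ A₂ ih₁ ih₂ =>
    rcases B with (_ | k') | B | ⟨B₁, B₂⟩ <;>
      simp [rank, t_injective.eq_iff, enc_injective.eq_iff] at h ⊢
    exact ⟨ih₁ h.1, ih₂ h.2⟩

theorem exists_t_add_one_eq {T : BT} (hT : T ≠ .leaf) : ∃ k, t (k + 1) = T :=
  ⟨enc T - 1, by rw [Nat.sub_add_cancel (Nat.one_le_iff_ne_zero.mpr (enc_eq_zero_iff.not.mpr hT)),
    t_enc]⟩

theorem rank_surjective : Function.Surjective rank := by
  intro T
  induction T using (measure enc).wf.induction with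
  | _ T ih =>
    cases T with
    | leaf => exact ⟨.v 0, rfl⟩
    | node b c =>
      have hb : enc b < enc (.node b c) := lt_consNat_left _ _
      have hc : enc c < enc (.node b c) := lt_consNat_right _ _
      rcases eq_or_ne b .leaf with rfl | hb₀
      · obtain ⟨A, rfl⟩ := ih c hc
        exact ⟨.l A, rfl⟩
      obtain ⟨k, rfl⟩ := exists_t_add_one_eq hb₀
      rcases eq_or_ne c .leaf with rfl | hc₀
      · exact ⟨.v (k + 1), rfl⟩
      obtain ⟨m, rfl⟩ := exists_t_add_one_eq hc₀
      obtain ⟨A, hA⟩ := ih (t k) (show enc (t k) < _ by simp only [enc_t] at hb ⊢; omega)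
      obtain ⟨B, hB⟩ := ih (t m) (show enc (t m) < _ by simp only [enc_t] at hc ⊢; omega)
      exact ⟨.a A B, by rw [rank, hA, hB, enc_t, enc_t]⟩

theorem rank_bijective : Function.Bijective rank :=
  ⟨rank_injective, rank_surjective⟩
end
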